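/- Let p_1, p_2, …, p_n be distinct primes and f_1, …, f_n natural numbers. Then μ(C_{p_1}^{f_1} × C_{p_2}^{f_2} × ⋯ × C_{p_n}^{f_n}) = ∏_{i=1}^{n} (-1)^{f_i} · p_i^{C(f_i,2)}, where C(f,2) denotes the binomial coefficient f choose 2. -/

import Mathlib

open Finset

/-- The Möbius function of the subgroup lattice of a finite group `G`,
evaluated at a pair of subgroups. -/
noncomputable def subgroupMu (G : Type*) [Group G] [Finite G] (H K : Subgroup G) : ℤ :=
  letI : Fintype (Subgroup G) := Fintype.ofFinite _
  letI : DecidableEq (Subgroup G) := Classical.decEq _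
  letI : @DecidableRel (Subgroup G) (Subgroup G) (· < ·) := Classical.decRel _
  letI : @DecidableRel (Subgroup G) (Subgroup G) (· ≤ ·) := Classical.decRel _
  letI := Fintype.toLocallyFiniteOrder (α := Subgroup G)
  IncidenceAlgebra.mu ℤ H K

/-- The Möbius number of a finite group `G`: the value `μ(⊥, ⊤)` of the Möbius
function of its lattice of subgroups. -/
noncomputable def muGrp (G : Type*) [Group G] [Finite G] : ℤ :=
  subgroupMu G ⊥ ⊤

/-!
For pairwise coprime exponents every subgroup of `∏ Gᵢ` is the product of its projections, so the
subgroup lattice of the product is the product of the subgroup lattices, and Möbius numbers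
multiply. For `C_p^f` the subgroup lattice is the lattice of subspaces of `𝔽_p^f`. Weisner's theorem
applied to the line `a = 0 × 𝔽_p` in `V × 𝔽_p` gives `μ(V × 𝔽_p) = -p^(dim V) μ(V)`: the proper
subspaces `x` with `x ⊔ a = ⊤` are exactly the graphs of the `p^(dim V)` linear forms on `V`, and
the interval below each of them is the subspace lattice of `V`.
-/

open IncidenceAlgebra

noncomputable abbrev Finite.toLocallyFiniteOrder {α : Type*} [Preorder α] [Finite α] :
    LocallyFiniteOrder α :=
  .ofFiniteIcc fun _ _ ↦ Set.toFinite _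

namespace IncidenceAlgebra

section Congr
variable {𝕜 α β : Type*} [Ring 𝕜] [PartialOrder α] [PartialOrder β]
  [LocallyFiniteOrder α] [LocallyFiniteOrder β] [DecidableEq α] [DecidableEq β]

theorem mu_map_of_ordConnected (e : β ↪o α) (he : (Set.range e).OrdConnected) (a b : β) :
    mu 𝕜 (e a) (e b) = mu 𝕜 a b := by
  classical
  let mue : IncidenceAlgebra 𝕜 β :=
    { toFun := fun a b ↦ mu 𝕜 (e a) (e b)
      eq_zero_of_not_le' := fun a b hab ↦ apply_eq_zero_of_not_le (by simpa using hab) _ }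
  suffices mu 𝕜 = mue by rw [this]; rfl
  suffices mue * zeta 𝕜 = 1 by
    rw [← mu_mul_zeta] at this
    apply_fun (· * mu 𝕜) at this
    simpa [mul_assoc, zeta_mul_mu] using this.symm
  ext a b
  have hIcc : (Icc a b).map e.toEmbedding = Icc (e a) (e b) := by
    apply coe_injective
    simpa using e.image_Icc he a b
  calc (mue * zeta 𝕜 : IncidenceAlgebra 𝕜 β) a b = ∑ x ∈ Icc a b, mu 𝕜 (e a) (e x) := by
        refine sum_congr rfl fun x hx ↦ ?_
        simp [mue, (mem_Icc.1 hx).2]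
    _ = ∑ z ∈ Icc (e a) (e b), mu 𝕜 (e a) z := by rw [← hIcc, sum_map]; rfl
    _ = (1 : IncidenceAlgebra 𝕜 β) a b := by simp [sum_Icc_mu_right]

theorem eulerChar_congr [BoundedOrder α] [BoundedOrder β] (e : α ≃o β) :
    eulerChar 𝕜 α = eulerChar 𝕜 β := by
  rw [eulerChar, eulerChar, ← e.map_bot, ← e.map_top]
  exact (mu_map_of_ordConnected e.toOrderEmbedding (by simp [Set.ordConnected_univ]) ⊥ ⊤).symm

end Congr

theorem eulerChar_pi_fin {𝕜 : Type*} [CommRing 𝕜] : ∀ {n : ℕ} (L : Fin n → Type*)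
    [∀ i, PartialOrder (L i)] [∀ i, BoundedOrder (L i)] [∀ i, LocallyFiniteOrder (L i)]
    [∀ i, DecidableEq (L i)] [LocallyFiniteOrder (∀ i, L i)] [DecidableEq (∀ i, L i)],
    eulerChar 𝕜 (∀ i, L i) = ∏ i, eulerChar 𝕜 (L i)
  | 0, L, _, _, _, _, _, _ => by simp [eulerChar, Subsingleton.elim (⊥ : ∀ i, L i) ⊤]
  | n + 1, L, _, _, _, _, _, _ => by
    classical
    rw [eulerChar_congr (Fin.consOrderIso L).symm, eulerChar_prod, eulerChar_pi_fin,
      Fin.prod_univ_succ]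

section Weisner
variable {𝕜 α : Type*} [Ring 𝕜] [Lattice α] [BoundedOrder α] [Fintype α] [DecidableEq α]
  [LocallyFiniteOrder α]

theorem sum_mu_bot_of_sup_eq_top {a : α} (ha : a ≠ ⊥) :
    ∑ x with x ⊔ a = ⊤, mu 𝕜 ⊥ x = 0 := by
  classical
  have hzeta (x : α) : (if x ⊔ a = ⊤ then 1 else 0 : 𝕜) = ∑ y with x ≤ y ∧ a ≤ y, mu 𝕜 y ⊤ := by
    rw [← sum_Icc_mu_left (x ⊔ a) ⊤]
    congr 1; ext y; simp [sup_le_iff]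
  have hmu (y : α) : ∑ x with x ≤ y, mu 𝕜 (⊥ : α) x = if ⊥ = y then 1 else 0 := by
    rw [← sum_Icc_mu_right ⊥ y]
    congr 1; ext x; simp
  calc ∑ x with x ⊔ a = ⊤, mu 𝕜 ⊥ x
      = ∑ x, mu 𝕜 ⊥ x * ∑ y with x ≤ y ∧ a ≤ y, mu 𝕜 y ⊤ := by
        simp_rw [← hzeta, mul_ite, mul_one, mul_zero, sum_ite, sum_const_zero, add_zero]
    _ = ∑ y with a ≤ y, (∑ x with x ≤ y, mu 𝕜 ⊥ x) * mu 𝕜 y ⊤ := by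
        simp_rw [mul_sum, sum_mul, sum_filter]
        rw [sum_comm]
        refine sum_congr rfl fun y _ ↦ ?_
        split_ifs <;> simp_all
    _ = 0 := by
        refine sum_eq_zero fun y hy ↦ ?_
        have : (⊥ : α) ≠ y := fun h ↦ ha (le_bot_iff.1 (h ▸ (mem_filter.1 hy).2))
        simp [hmu, this]

end Weisner

end IncidenceAlgebra

namespace Subgroup

variable {ι : Type*} [Fintype ι] [DecidableEq ι] {G : ι → Type*} [∀ i, Group (G i)]

theorem mulSingle_apply_mem_of_coprime_exponent
    (hG : Pairwise fun i j ↦ (Monoid.exponent (G i)).Coprime (Monoid.exponent (G j)))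
    {K : Subgroup (∀ i, G i)} {k : ∀ i, G i} (hk : k ∈ K) (i : ι) :
    Pi.mulSingle i (k i) ∈ K := by
  set P := ∏ j ∈ univ.erase i, Monoid.exponent (G j)
  have hkP : k ^ P = Pi.mulSingle i (k i ^ P) := by
    ext j
    rcases eq_or_ne j i with rfl | hj
    · simp
    · have hdvd : Monoid.exponent (G j) ∣ P := dvd_prod_of_mem _ (by simpa using hj)
      rw [Pi.pow_apply, Pi.mulSingle_eq_of_ne hj, Monoid.exponent_dvd_iff_forall_pow_eq_one.1 hdvd]
  have hcop : P.Coprime (orderOf (k i)) :=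
    (Nat.Coprime.prod_left fun j hj ↦ hG (ne_of_mem_erase hj)).coprime_dvd_right
      (Monoid.order_dvd_exponent _)
  obtain ⟨m, hm⟩ := exists_pow_eq_self_of_coprime hcop
  rw [← hm, Pi.mulSingle_pow, ← hkP]
  exact pow_mem (pow_mem hk P) m

omit [Fintype ι] in
theorem map_evalMonoidHom_pi (S : ∀ i, Subgroup (G i)) (i : ι) :
    (pi Set.univ S).map (Pi.evalMonoidHom G i) = S i := by
  refine le_antisymm (map_le_iff_le_comap.2 fun x hx ↦ hx i trivial) fun s hs ↦ ?_
  refine ⟨Pi.mulSingle i s, mulSingle_mem_pi i s |>.2 fun _ ↦ hs, Pi.mulSingle_eq_same i s⟩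

theorem pi_map_evalMonoidHom_of_coprime_exponent
    (hG : Pairwise fun i j ↦ (Monoid.exponent (G i)).Coprime (Monoid.exponent (G j)))
    (K : Subgroup (∀ i, G i)) :
    pi Set.univ (fun i ↦ K.map (Pi.evalMonoidHom G i)) = K := by
  refine le_antisymm (pi_le_iff.2 fun i ↦ ?_) (le_pi_iff.2 fun i _ ↦ map_le_iff_le_comap.1 le_rfl)
  rintro _ ⟨_, ⟨k, hk, rfl⟩, rfl⟩
  exact mulSingle_apply_mem_of_coprime_exponent hG hk i

def piOrderIsoOfCoprimeExponent
    (hG : Pairwise fun i j ↦ (Monoid.exponent (G i)).Coprime (Monoid.exponent (G j))) :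
    (∀ i, Subgroup (G i)) ≃o Subgroup (∀ i, G i) :=
  Equiv.toOrderIso
    { toFun := pi Set.univ
      invFun := fun K i ↦ K.map (Pi.evalMonoidHom G i)
      left_inv := fun S ↦ funext (map_evalMonoidHom_pi S)
      right_inv := pi_map_evalMonoidHom_of_coprime_exponent hG }
    (fun _ _ h _ hx i _ ↦ h i (hx i trivial)) (fun _ _ h _ ↦ map_mono h)

end Subgroup

namespace Submodule

theorem mu_bot_eq_eulerChar {𝕜 R M : Type*} [Ring 𝕜] [Ring R] [AddCommGroup M] [Module R M]
    [LocallyFiniteOrder (Submodule R M)] [DecidableEq (Submodule R M)] (W : Submodule R M)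
    [LocallyFiniteOrder (Submodule R W)] [DecidableEq (Submodule R W)] :
    mu 𝕜 ⊥ W = eulerChar 𝕜 (Submodule R W) := by
  have hrange : Set.range (MapSubtype.orderEmbedding W) = Set.Iic W := by
    ext N
    refine ⟨?_, fun hN ↦ ⟨comap W.subtype N, by simpa [map_comap_subtype] using hN⟩⟩
    rintro ⟨U, rfl⟩
    exact map_subtype_le W U
  rw [eulerChar, ← mu_map_of_ordConnected (MapSubtype.orderEmbedding W)
    (hrange ▸ Set.ordConnected_Iic)]
  simp

end Submodule

theorem LinearMap.graph_injective {R M N : Type*} [Semiring R] [AddCommMonoid M] [AddCommMonoid N]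
    [Module R M] [Module R N] : Function.Injective (graph : (M →ₗ[R] N) → Submodule R (M × N)) := by
  intro φ ψ h
  ext u
  exact (ψ.mem_graph_iff _).1 (h ▸ (φ.mem_graph_iff _).2 rfl : (u, φ u) ∈ ψ.graph)

section GraphComplements
variable {K V : Type*} [Field K] [AddCommGroup V] [Module K V]

namespace LinearMap

theorem graph_sup_span_eq_top (φ : V →ₗ[K] K) : φ.graph ⊔ K ∙ ((0 : V), (1 : K)) = ⊤ := by
  refine eq_top_iff.2 fun z _ ↦ ?_
  have hz : z = (z.1, φ z.1) + (z.2 - φ z.1) • ((0 : V), (1 : K)) := by ext <;> simp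
  exact hz ▸ Submodule.add_mem_sup ((φ.mem_graph_iff _).2 rfl)
    (Submodule.mem_span_singleton.2 ⟨_, rfl⟩)

theorem graph_ne_top (φ : V →ₗ[K] K) : φ.graph ≠ ⊤ := by
  intro h
  have : ((0 : V), (1 : K)) ∈ φ.graph := h ▸ Submodule.mem_top
  simp [mem_graph_iff] at this

end LinearMap

theorem Submodule.exists_eq_graph_of_sup_span_eq_top {x : Submodule K (V × K)}
    (hsup : x ⊔ K ∙ ((0 : V), (1 : K)) = ⊤) (hx : x ≠ ⊤) : ∃ φ : V →ₗ[K] K, x = φ.graph := by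
  have hdisj : Disjoint x (K ∙ ((0 : V), (1 : K))) := by
    refine (disjoint_span_singleton' (by simp)).2 fun h ↦ hx ?_
    rwa [sup_eq_left.2 ((span_singleton_le_iff_mem _ _).2 h)] at hsup
  refine Submodule.exists_eq_graph ⟨fun w w' hww' ↦ ?_, fun u ↦ ?_⟩
  · replace hww' : (w : V × K).1 = (w' : V × K).1 := hww'
    have hmem : (w : V × K) - w' ∈ K ∙ ((0 : V), (1 : K)) :=
      mem_span_singleton.2 ⟨((w : V × K) - w').2, by ext <;> simp [hww']⟩
    exact Subtype.ext (sub_eq_zero.1 (disjoint_def.1 hdisj _ (sub_mem w.2 w'.2) hmem))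
  · obtain ⟨y, hy, z, hz, hyz⟩ := mem_sup.1 (hsup ▸ mem_top : ((u, 0) : V × K) ∈ x ⊔ _)
    obtain ⟨c, rfl⟩ := mem_span_singleton.1 hz
    exact ⟨⟨y, hy⟩, by simpa using congrArg Prod.fst hyz⟩

end GraphComplements

section FiniteField
variable {K V : Type*} [Field K] [Finite K] [AddCommGroup V] [Module K V] [Finite V]

theorem LinearMap.mu_bot_graph {𝕜 : Type*} [Ring 𝕜] [LocallyFiniteOrder (Submodule K (V × K))]
    [DecidableEq (Submodule K (V × K))] [LocallyFiniteOrder (Submodule K V)]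
    [DecidableEq (Submodule K V)] (φ : V →ₗ[K] K) :
    mu 𝕜 ⊥ φ.graph = eulerChar 𝕜 (Submodule K V) := by
  classical
  let := Finite.toLocallyFiniteOrder (α := Submodule K φ.graph)
  have hbij : Function.Bijective ((LinearMap.fst K V K).comp φ.graph.subtype) :=
    ⟨fun w w' h ↦ Subtype.ext <| Prod.ext h <| by
      rw [(φ.mem_graph_iff _).1 w.2, (φ.mem_graph_iff _).1 w'.2]; exact congrArg φ h,
     fun u ↦ ⟨⟨(u, φ u), rfl⟩, rfl⟩⟩
  rw [Submodule.mu_bot_eq_eulerChar]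
  exact eulerChar_congr (Submodule.orderIsoMapComapOfBijective _ hbij)

theorem eulerChar_submodule_prod_field {𝕜 : Type*} [Ring 𝕜]
    [LocallyFiniteOrder (Submodule K (V × K))]
    [DecidableEq (Submodule K (V × K))] [LocallyFiniteOrder (Submodule K V)]
    [DecidableEq (Submodule K V)] :
    eulerChar 𝕜 (Submodule K (V × K)) =
      -(Nat.card (Module.Dual K V) : 𝕜) * eulerChar 𝕜 (Submodule K V) := by
  classical
  let := Fintype.ofFinite (Submodule K (V × K))
  have : Finite (Module.Dual K V) := .of_injective _ DFunLike.coe_injective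
  let := Fintype.ofFinite (Module.Dual K V)
  set a := K ∙ ((0 : V), (1 : K))
  have hcompl : ({x | x ⊔ a = ⊤} : Finset _) = insert ⊤ (univ.image LinearMap.graph) := by
    ext x
    rcases eq_or_ne x ⊤ with rfl | hx
    · simp
    · simpa [hx, eq_comm] using ⟨fun h ↦ Submodule.exists_eq_graph_of_sup_span_eq_top h hx,
        by rintro ⟨φ, rfl⟩; exact φ.graph_sup_span_eq_top⟩
  have hweisner := sum_mu_bot_of_sup_eq_top (𝕜 := 𝕜) (a := a) (by simp [a])
  rw [hcompl, sum_insert (by simpa using fun φ ↦ φ.graph_ne_top),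
    sum_image fun φ _ ψ _ h ↦ LinearMap.graph_injective h] at hweisner
  simp only [LinearMap.mu_bot_graph, sum_const, card_univ, ← Nat.card_eq_fintype_card,
    nsmul_eq_mul] at hweisner
  rwa [eulerChar, neg_mul, eq_neg_iff_add_eq_zero]

theorem eulerChar_submodule_fin_pi {𝕜 : Type*} [CommRing 𝕜] :
    ∀ (m : ℕ) [LocallyFiniteOrder (Submodule K (Fin m → K))]
      [DecidableEq (Submodule K (Fin m → K))],
      eulerChar 𝕜 (Submodule K (Fin m → K)) = (-1) ^ m * (Nat.card K : 𝕜) ^ m.choose 2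
  | 0, _, _ => by simp [eulerChar, Subsingleton.elim (⊥ : Submodule K (Fin 0 → K)) ⊤]
  | m + 1, _, _ => by
    classical
    let := Finite.toLocallyFiniteOrder (α := Submodule K (Fin m → K))
    let := Finite.toLocallyFiniteOrder (α := Submodule K ((Fin m → K) × K))
    let e : (Fin (m + 1) → K) ≃ₗ[K] (Fin m → K) × K :=
      (Fin.consLinearEquiv K fun _ ↦ K).symm.trans (LinearEquiv.prodComm K K _)
    have hdual : Nat.card (Module.Dual K (Fin m → K)) = Nat.card K ^ m := by
      rw [Nat.card_congr (LinearEquiv.piRing K K (Fin m) K).toEquiv, Nat.card_fun, Nat.card_fin]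
    rw [eulerChar_congr (Submodule.orderIsoMapComap e), eulerChar_submodule_prod_field,
      eulerChar_submodule_fin_pi m, hdual, Nat.choose_succ_succ', Nat.choose_one_right]
    push_cast
    ring

end FiniteField

theorem muGrp_eq_eulerChar (G : Type*) [Group G] [Finite G] [LocallyFiniteOrder (Subgroup G)]
    [DecidableEq (Subgroup G)] : muGrp G = eulerChar ℤ (Subgroup G) := by
  unfold muGrp subgroupMu eulerChar
  congr!
  exact Subsingleton.elim _ _

theorem muGrp_pi_of_coprime_exponent {n : ℕ} {G : Fin n → Type*} [∀ i, Group (G i)]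
    [∀ i, Finite (G i)]
    (hG : Pairwise fun i j ↦ (Monoid.exponent (G i)).Coprime (Monoid.exponent (G j))) :
    muGrp (∀ i, G i) = ∏ i, muGrp (G i) := by
  classical
  let := fun i ↦ Finite.toLocallyFiniteOrder (α := Subgroup (G i))
  let := Finite.toLocallyFiniteOrder (α := Subgroup (∀ i, G i))
  simp only [muGrp_eq_eulerChar]
  rw [← eulerChar_congr (Subgroup.piOrderIsoOfCoprimeExponent hG), eulerChar_pi_fin]

theorem muGrp_elementary_abelian (p : ℕ) [Fact p.Prime] (f : ℕ) :
    muGrp (Fin f → Multiplicative (ZMod p)) = (-1) ^ f * (p : ℤ) ^ f.choose 2 := by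
  classical
  let := Finite.toLocallyFiniteOrder (α := Subgroup (Fin f → Multiplicative (ZMod p)))
  let := Finite.toLocallyFiniteOrder (α := Submodule (ZMod p) (Fin f → ZMod p))
  let e : Subgroup (Fin f → Multiplicative (ZMod p)) ≃o Submodule (ZMod p) (Fin f → ZMod p) :=
    (MulEquiv.piMultiplicative _).symm.mapSubgroup.trans <|
      AddSubgroup.toSubgroup.symm.trans (AddSubgroup.toZModSubmodule p)
  rw [muGrp_eq_eulerChar, eulerChar_congr e, eulerChar_submodule_fin_pi, Nat.card_zmod]

/-- The Möbius number of a product of elementary abelian groups for distinct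
primes is the product of their Möbius numbers. -/
theorem muGrp_prod_elementary_abelian
    {n : ℕ} (p f : Fin n → ℕ) [∀ i, Fact (p i).Prime]
    (hp' : Function.Injective p) :
    muGrp (∀ i : Fin n, Fin (f i) → Multiplicative (ZMod (p i))) =
      ∏ i, (-1) ^ (f i) * (p i : ℤ) ^ ((f i).choose 2) := by
  have hexp (i : Fin n) : Monoid.exponent (Fin (f i) → Multiplicative (ZMod (p i))) ∣ p i :=
    Monoid.exponent_dvd_iff_forall_pow_eq_one.2 fun g ↦ by ext; simp
  have hcop : Pairwise fun i j ↦ (Monoid.exponent (Fin (f i) → Multiplicative (ZMod (p i)))).Coprime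
      (Monoid.exponent (Fin (f j) → Multiplicative (ZMod (p j)))) := fun i j hij ↦
    .of_dvd (hexp i) (hexp j) ((Nat.coprime_primes Fact.out Fact.out).2 (hp'.ne hij))
  rw [muGrp_pi_of_coprime_exponent hcop]
  exact prod_congr rfl fun i _ ↦ muGrp_elementary_abelian (p i) (f i)
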